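/- Let (G, N, *) be a fuzzy normed gyrogroup with induced fuzzy gyronorm metric M. Then the commutative-like condition N((a⊕x)⊕gyr[a,x](y⊖a), t) = N(x⊕y, t) for all a,x,y ∈ G and t > 0 is equivalent to right-gyrotranslation invariance: M(x⊕a, y⊕a, t) = M(x,y,t) for all x,y,a ∈ G and t > 0. -/
import Mathlib


open Filter Topology

universe u

class Gyrogroup (G : Type u) where
  op : G → G → G
  e : G
  neg : G → G
  gyr : G → G → G → G
  op_left_id : ∀ x, op e x = x
  op_left_neg : ∀ x, op (neg x) x = e
  gyr_bijective : ∀ a b, Function.Bijective (gyr a b)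
  gyr_op : ∀ a b x y, gyr a b (op x y) = op (gyr a b x) (gyr a b y)
  gyrassoc : ∀ x y z, op x (op y z) = op (op x y) (gyr x y z)
  left_loop : ∀ x y, gyr (op x y) y = gyr x y

open Gyrogroup

/-- A continuous t-norm on `[0,1]`, represented as a binary operation on `ℝ`
with the t-norm axioms on `[0,1]`. -/
structure ContinuousTNorm (star : ℝ → ℝ → ℝ) : Prop where
  mem : ∀ a b, a ∈ Set.Icc (0:ℝ) 1 → b ∈ Set.Icc (0:ℝ) 1 → star a b ∈ Set.Icc (0:ℝ) 1
  comm : ∀ a b, star a b = star b a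
  assoc : ∀ a b c, star (star a b) c = star a (star b c)
  one_id : ∀ a, a ∈ Set.Icc (0:ℝ) 1 → star a 1 = a
  mono : ∀ a b c d, a ≤ c → b ≤ d → star a b ≤ star c d
  cont : ContinuousOn (fun p : ℝ × ℝ => star p.1 p.2) (Set.Icc 0 1 ×ˢ Set.Icc 0 1)

/-- A fuzzy metric in the sense of George and Veeramani. -/
structure IsFuzzyMetric {X : Type u} (M : X → X → ℝ → ℝ) (star : ℝ → ℝ → ℝ) : Prop where
  mem : ∀ x y t, 0 < t → M x y t ∈ Set.Icc (0:ℝ) 1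
  pos : ∀ x y t, 0 < t → 0 < M x y t
  eq_one_iff : ∀ x y, (∀ t, 0 < t → M x y t = 1) ↔ x = y
  symm : ∀ x y t, 0 < t → M x y t = M y x t
  tri : ∀ x y z t s, 0 < t → 0 < s → star (M x y t) (M y z s) ≤ M x z (t + s)
  cont : ∀ x y, ContinuousOn (M x y) (Set.Ioi 0)

/-- A gyronorm on a gyrogroup. -/
structure IsGyronorm {G : Type u} [Gyrogroup G] (n : G → ℝ) : Prop where
  nonneg : ∀ x, 0 ≤ n x
  eq_zero_iff : ∀ x, n x = 0 ↔ x = (Gyrogroup.e : G)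
  neg_eq : ∀ x, n (Gyrogroup.neg x) = n x
  subadd : ∀ x y, n (Gyrogroup.op x y) ≤ n x + n y
  gyr_eq : ∀ a b x, n (Gyrogroup.gyr a b x) = n x

/-- A fuzzy gyronorm on a gyrogroup. -/
structure IsFuzzyGyronorm {G : Type u} [Gyrogroup G] (N : G → ℝ → ℝ) (star : ℝ → ℝ → ℝ) : Prop where
  mem : ∀ x t, 0 < t → N x t ∈ Set.Icc (0:ℝ) 1
  pos : ∀ x t, 0 < t → 0 < N x t
  eq_one_iff : ∀ x, (∀ t, 0 < t → N x t = 1) ↔ x = (Gyrogroup.e : G)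
  neg_eq : ∀ x t, 0 < t → N (Gyrogroup.neg x) t = N x t
  subadd : ∀ x y t s, 0 < t → 0 < s → star (N x t) (N y s) ≤ N (Gyrogroup.op x y) (t + s)
  cont : ∀ x, ContinuousOn (N x) (Set.Ioi 0)
  gyr_eq : ∀ a b x t, 0 < t → N (Gyrogroup.gyr a b x) t = N x t


section GyroLemmas

variable {G : Type u} [Gyrogroup G]

lemma gyro_op_left_cancel (a : G) {x y : G} (h : op a x = op a y) : x = y := by
  have h2 : op (neg a) (op a x) = op (neg a) (op a y) := by rw [h]
  rw [gyrassoc, gyrassoc, op_left_neg, op_left_id, op_left_id] at h2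
  exact (gyr_bijective (neg a) a).1 h2

lemma gyro_gyr_e_left (a z : G) : gyr e a z = z := by
  have h := gyrassoc (e : G) a z
  rw [op_left_id, op_left_id] at h
  exact (gyro_op_left_cancel a h).symm

lemma gyro_gyr_neg_self (a z : G) : gyr (neg a) a z = z := by
  have h := left_loop (neg a) a
  rw [op_left_neg] at h
  rw [← h]
  exact gyro_gyr_e_left a z

lemma gyro_neg_cancel_left (a b : G) : op (neg a) (op a b) = b := by
  rw [gyrassoc, op_left_neg, op_left_id, gyro_gyr_neg_self]

lemma gyro_op_right_id (a : G) : op a e = a :=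
  gyro_op_left_cancel (neg a) (by rw [gyro_neg_cancel_left, op_left_neg])

lemma gyro_op_right_neg (a : G) : op a (neg a) = e :=
  gyro_op_left_cancel (neg a) (by rw [gyro_neg_cancel_left, gyro_op_right_id])

lemma gyro_op_right_cancel (c : G) {u v : G} (h : op u c = op v c) : u = v := by
  have key : ∀ w : G, w = op (op w c) (gyr (op w c) c (neg c)) := by
    intro w
    rw [left_loop, ← gyrassoc, gyro_op_right_neg, gyro_op_right_id]
  rw [key u, h, ← key v]

lemma gyro_neg_neg (a : G) : neg (neg a) = a :=
  gyro_op_right_cancel (neg a) (by rw [op_left_neg, gyro_op_right_neg])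

lemma gyro_neg_cancel_left' (a b : G) : op a (op (neg a) b) = b := by
  have h := gyro_neg_cancel_left (neg a) b
  rwa [gyro_neg_neg] at h

lemma gyro_neg_e : (neg e : G) = e := by
  rw [← gyro_op_right_id (neg (e : G)), op_left_neg]

end GyroLemmas

theorem commutative_like_iff_right_invariant {G : Type u} [Gyrogroup G]
    (N : G → ℝ → ℝ) (star : ℝ → ℝ → ℝ)
    (hstar : ContinuousTNorm star) (hN : IsFuzzyGyronorm N star)
    (M : G → G → ℝ → ℝ) (hM : M = fun x y t => N (op (neg x) y) t) :
    (∀ a x y : G, ∀ t : ℝ, 0 < t →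
      N (op (op a x) (gyr a x (op y (neg a)))) t = N (op x y) t) ↔
    (∀ x y a : G, ∀ t : ℝ, 0 < t → M (op x a) (op y a) t = M x y t) := by
  subst hM
  constructor
  · intro H x y a t ht
    show N (op (neg (op x a)) (op y a)) t = N (op (neg x) y) t
    have h1 := H (neg (op x a)) y (neg x) t ht
    rw [gyro_neg_neg, gyro_neg_cancel_left, ← gyrassoc] at h1
    have h2 := H x (neg x) y t ht
    rw [← gyrassoc, gyro_neg_cancel_left'] at h2
    exact h1.trans h2
  · intro H a x y t ht
    rw [← gyrassoc]
    have h1 := H (neg y) x (op y (neg a)) t ht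
    simp only [] at h1
    rw [gyro_neg_cancel_left, gyro_neg_neg, gyro_neg_neg] at h1
    have h2 := H (neg y) x y t ht
    simp only [] at h2
    rw [op_left_neg, gyro_neg_e, op_left_id, gyro_neg_neg] at h2
    exact h1.trans h2.symm
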